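/- arXiv:2502.13772 — 8 statements merged into one kernel-verified Lean document; each statement's English description precedes it below -/
import Mathlib

section
/- Consider a set N of agents, a finite set A of alternatives with |A| ≥ 2, and a profile of strict preference orders (≻_i)_{i∈N} over A. There exists a single lottery over A that is efficient for every possible vector of quantile parameters h ∈ [0,1]^N if and only if all agents rank the same alternative first. -/
/-!
The `0`-quantile representative of a lottery is the worst alternative in its support and the
`1`-quantile representative is the best one. If the support of `x` contains an alternative `t`
above the worst one `v` of some agent, then at `h ≡ 0` the point mass `δ_t` dominates `x`: its
representative `t` is no worse than anyone's worst supported alternative and strictly better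
than `v`. So a lottery efficient for all `h` is a point mass `δ_a`, and if some agent prefers
`b` to `a`, then `½ δ_a + ½ δ_b` dominates it at `h ≡ 1`. Conversely every representative of
`δ_a` is `a`, which cannot be improved upon when `a` is everyone's top alternative.
-/

open scoped Classical
open Finset

/-- Total probability mass of options strictly worse than `o` under strict preference `p`
(`p u v` means `u` is strictly preferred to `v`). -/
noncomputable def sWorse {O : Type*} [Fintype O] (x : O → ℝ) (p : O → O → Prop) (o : O) : ℝ :=
  ∑ o' ∈ univ.filter (fun o' => p o o'), x o'

/-- Total probability mass of options weakly worse than `o`. -/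
noncomputable def wWorse {O : Type*} [Fintype O] (x : O → ℝ) (p : O → O → Prop) (o : O) : ℝ :=
  ∑ o' ∈ univ.filter (fun o' => p o o' ∨ o' = o), x o'

/-- `x` is a lottery (probability distribution) over the finite set of options. -/
def IsLottery {O : Type*} [Fintype O] (x : O → ℝ) : Prop :=
  (∀ o, 0 ≤ x o) ∧ ∑ o, x o = 1

/-- `o` is the `h`-quantile representative of lottery `x` with respect to strict preference `p`:
for `h = 1` it is the most preferred option with positive probability; for `h < 1` it is the
option whose strictly-worse mass is at most `h` while its weakly-worse mass exceeds `h`. -/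
def IsRep {O : Type*} [Fintype O] (x : O → ℝ) (p : O → O → Prop) (h : ℝ) (o : O) : Prop :=
  (h = 1 ∧ 0 < x o ∧ ∀ o', p o' o → x o' = 0) ∨
  (h < 1 ∧ sWorse x p o ≤ h ∧ h < wWorse x p o)

/-- A lottery `y` dominates `x` for the profile `pref` and quantile vector `h`. -/
def Dominates {N O : Type*} [Fintype O] (pref : N → O → O → Prop) (h : N → ℝ)
    (y x : O → ℝ) : Prop :=
  (∀ i u v, IsRep y (pref i) (h i) u → IsRep x (pref i) (h i) v → (pref i u v ∨ u = v)) ∧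
  (∃ i u v, IsRep y (pref i) (h i) u ∧ IsRep x (pref i) (h i) v ∧ pref i u v)

lemma rel_or_eq_of_not_rel {α : Type*} {r : α → α → Prop} [Std.Trichotomous r] {a b : α}
    (h : ¬ r a b) : r b a ∨ b = a :=
  or_iff_not_imp_left.2 fun h' => Std.Trichotomous.trichotomous b a h' h

section Quantile

variable {O : Type*} [Fintype O] {x : O → ℝ} {p : O → O → Prop} {h : ℝ} {o : O}

lemma wWorse_eq_sWorse_add (hirr : ¬ p o o) : wWorse x p o = sWorse x p o + x o := by
  have hfilter : univ.filter (fun o' => p o o' ∨ o' = o) = insert o (univ.filter (p o)) := by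
    ext o'; by_cases ho' : o' = o <;> simp [ho']
  rw [wWorse, sWorse, hfilter, sum_insert (by simpa using hirr), add_comm]

lemma IsRep.pos [Std.Irrefl p] (hr : IsRep x p h o) : 0 < x o := by
  rcases hr with ⟨-, hpos, -⟩ | ⟨-, hs, hw⟩
  · exact hpos
  · rw [wWorse_eq_sWorse_add (irrefl o)] at hw
    linarith

lemma isRep_zero_iff [Std.Irrefl p] (hx : ∀ o, 0 ≤ x o) :
    IsRep x p 0 o ↔ 0 < x o ∧ ∀ o', p o o' → x o' = 0 := by
  have hsum : sWorse x p o = 0 ↔ ∀ o', p o o' → x o' = 0 := by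
    simp [sWorse, sum_eq_zero_iff_of_nonneg fun o' _ => hx o']
  refine ⟨fun hr => ⟨hr.pos, ?_⟩, fun ⟨hpos, hworse⟩ => Or.inr ⟨zero_lt_one, ?_, ?_⟩⟩
  · rcases hr with ⟨h01, -⟩ | ⟨-, hs, -⟩
    · exact absurd h01 zero_ne_one
    · exact hsum.1 (le_antisymm hs (sum_nonneg fun o' _ => hx o'))
  · exact (hsum.2 hworse).le
  · rw [wWorse_eq_sWorse_add (irrefl o), hsum.2 hworse, zero_add]
    exact hpos

lemma isRep_one_iff : IsRep x p 1 o ↔ 0 < x o ∧ ∀ o', p o' o → x o' = 0 := by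
  simp [IsRep]

lemma IsLottery.exists_pos (hx : IsLottery x) : ∃ o, 0 < x o := by
  by_contra! hle
  have : ∑ o, x o ≤ 0 := sum_nonpos fun o _ => hle o
  linarith [hx.2]

lemma exists_isRep_zero [IsStrictOrder O p] (hx : IsLottery x) : ∃ o, IsRep x p 0 o := by
  obtain ⟨m, hm, hmin⟩ := (Finite.wellFounded_of_trans_of_irrefl (Function.swap p)).has_min
    {o | 0 < x o} hx.exists_pos
  refine ⟨m, (isRep_zero_iff hx.1).2 ⟨hm, fun o' ho' => ?_⟩⟩
  by_contra hne
  exact hmin o' (lt_of_le_of_ne (hx.1 o') (Ne.symm hne)) ho'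

lemma isLottery_single (a : O) : IsLottery (Pi.single a (1 : ℝ)) :=
  ⟨fun o => by by_cases hoa : o = a <;> simp [hoa], by simp⟩

lemma IsLottery.eq_single (hx : IsLottery x) {a : O} (hsupp : ∀ o, 0 < x o → o = a) :
    x = Pi.single a 1 := by
  have hzero : ∀ o, o ≠ a → x o = 0 := fun o hne =>
    le_antisymm (not_lt.1 fun hpos => hne (hsupp o hpos)) (hx.1 o)
  have hone : x a = 1 := by
    rw [← hx.2, sum_eq_single a (fun o _ => hzero o) (by simp)]
  ext o
  by_cases hoa : o = a
  · subst hoa; simp [hone]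
  · simp [hoa, hzero o hoa]

lemma IsRep.eq_of_single [Std.Irrefl p] {a : O} (hr : IsRep (Pi.single a 1) p h o) : o = a := by
  by_contra hne
  simpa [hne] using hr.pos

end Quantile

section Dominance

variable {N O : Type*} [Fintype O] (pref : N → O → O → Prop) [∀ i, IsStrictTotalOrder O (pref i)]

lemma not_dominates_single {a : O} (htop : ∀ i b, b ≠ a → pref i a b) (h : N → ℝ) (y : O → ℝ) :
    ¬ Dominates pref h y (Pi.single a 1) := by
  rintro ⟨-, i, u, v, -, hv, huv⟩
  obtain rfl := hv.eq_of_single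
  have hua : u ≠ v := by rintro rfl; exact irrefl u huv
  exact asymm huv (htop i u hua)

lemma dominates_zero_single {x : O → ℝ} (hx : ∀ o, 0 ≤ x o) {i : N} {t v : O} (ht : 0 < x t)
    (hv : IsRep x (pref i) 0 v) (htv : pref i t v) : Dominates pref 0 (Pi.single t 1) x := by
  have hrep_t : ∀ j, IsRep (Pi.single t (1 : ℝ)) (pref j) 0 t := fun j =>
    (isRep_zero_iff (isLottery_single t).1).2 ⟨by simp, fun o' ho' => by simp [ne_of_irrefl' ho']⟩
  refine ⟨fun j u v' hu hv' => ?_, i, t, v, hrep_t i, hv, htv⟩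
  obtain rfl := hu.eq_of_single
  exact rel_or_eq_of_not_rel fun hvu => ht.ne' (((isRep_zero_iff hx).1 hv').2 u hvu)

lemma isLottery_half_single_add_half_single (a b : O) :
    IsLottery (Pi.single a (1 / 2 : ℝ) + Pi.single b (1 / 2)) := by
  refine ⟨fun o => add_nonneg ?_ ?_, ?_⟩
  · rw [Pi.single_apply]; split_ifs <;> norm_num
  · rw [Pi.single_apply]; split_ifs <;> norm_num
  · simp [sum_add_distrib]
    norm_num

lemma dominates_one_half_single_add_half_single {i : N} {a b : O} (hba : pref i b a) :
    Dominates pref 1 (Pi.single a (1 / 2) + Pi.single b (1 / 2)) (Pi.single a 1) := by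
  have hab : a ≠ b := ne_of_irrefl' hba
  refine ⟨fun j u v hu hv => ?_, i, b, a, ?_, ?_, hba⟩
  · obtain rfl := hv.eq_of_single
    refine rel_or_eq_of_not_rel fun hvu => ?_
    simpa [hab] using (isRep_one_iff.1 hu).2 v hvu
  · refine isRep_one_iff.2 ⟨by simp [hab.symm], fun o' ho' => ?_⟩
    have hoa : o' ≠ a := fun hoa => asymm hba (hoa ▸ ho')
    simp [hoa, ne_of_irrefl ho']
  · exact isRep_one_iff.2 ⟨by simp, fun o' ho' => by simp [ne_of_irrefl ho']⟩

lemma eq_of_pos_of_forall_not_dominates_zero {x : O → ℝ} (hx : IsLottery x)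
    (heff : ∀ y, IsLottery y → ¬ Dominates pref 0 y x) (i : N) {s t : O}
    (hs : 0 < x s) (ht : 0 < x t) : s = t := by
  obtain ⟨v, hv⟩ := exists_isRep_zero (p := pref i) hx
  have heq_v : ∀ o, 0 < x o → o = v := fun o ho => by
    rcases rel_or_eq_of_not_rel (r := pref i) (a := v) (b := o)
      (fun hvo => ho.ne' (((isRep_zero_iff hx.1).1 hv).2 o hvo)) with hov | rfl
    · exact absurd (dominates_zero_single pref hx.1 ho hv hov) (heff _ (isLottery_single o))
    · rfl
  rw [heq_v s hs, heq_v t ht]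

end Dominance

theorem stmt1_general {N A : Type*} [Fintype A]
    (pref : N → A → A → Prop) (hp : ∀ i, IsStrictTotalOrder A (pref i)) :
    (∃ x : A → ℝ, IsLottery x ∧ ∀ h : N → ℝ, (∀ i, 0 ≤ h i ∧ h i ≤ 1) →
        ¬ ∃ y : A → ℝ, IsLottery y ∧ Dominates pref h y x) ↔
      (∃ a : A, ∀ i, ∀ b, b ≠ a → pref i a b) := by
  constructor
  · rintro ⟨x, hx, heff⟩
    obtain ⟨a, ha⟩ := hx.exists_pos
    refine ⟨a, fun i b hb => ?_⟩
    have hx_single : x = Pi.single a 1 := hx.eq_single fun t ht =>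
      eq_of_pos_of_forall_not_dominates_zero pref hx
        (fun y hy hdom => heff 0 (fun _ => ⟨le_rfl, zero_le_one⟩) ⟨y, hy, hdom⟩) i ht ha
    subst hx_single
    exact (rel_or_eq_of_not_rel fun hba => heff 1 (fun _ => ⟨zero_le_one, le_rfl⟩)
      ⟨_, isLottery_half_single_add_half_single a b,
        dominates_one_half_single_add_half_single pref hba⟩).resolve_right hb.symm
  · rintro ⟨a, htop⟩
    exact ⟨Pi.single a 1, isLottery_single a,
      fun h _ ⟨y, _, hdom⟩ => not_dominates_single pref htop h y hdom⟩

/-- There is a lottery that is efficient for every vector of quantile parameters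
iff all agents rank the same alternative first. -/
theorem stmt1 {N A : Type*} [Fintype N] [Fintype A] (hA : 2 ≤ Fintype.card A)
    (pref : N → A → A → Prop) (hp : ∀ i, IsStrictTotalOrder A (pref i)) :
    (∃ x : A → ℝ, IsLottery x ∧ ∀ h : N → ℝ, (∀ i, 0 ≤ h i ∧ h i ≤ 1) →
        ¬ ∃ y : A → ℝ, IsLottery y ∧ Dominates pref h y x) ↔
      (∃ a : A, ∀ i, ∀ b, b ≠ a → pref i a b) :=
  stmt1_general pref hp
end

section
/- For two alternatives {a, b}, any monotone randomized voting rule is strategyproof under the quantile utility model for every vector of quantile parameters h ∈ [0,1]^N. -/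
open scoped Classical
open Finset

lemma two_sum {A : Type*} [Fintype A] (a b : A) (hab : a ≠ b)
    (hA : ∀ o : A, o = a ∨ o = b) (f : A → ℝ) : ∑ o, f o = f a + f b := by
  have huniv : (univ : Finset A) = {a, b} := by
    ext o; simpa using hA o
  rw [huniv, Finset.sum_pair hab]

lemma eqOrders {A : Type*} (a b : A) (hA : ∀ o : A, o = a ∨ o = b)
    (p q : A → A → Prop) (hp : IsStrictTotalOrder A p) (hq : IsStrictTotalOrder A q)
    (h1 : p a b) (h2 : q a b) : p = q := by
  haveI := hp; haveI := hq
  funext u v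
  apply propext
  rcases hA u with hu | hu <;> rcases hA v with hv | hv <;> subst hu <;> subst hv
  · exact ⟨fun h => absurd h (irrefl_of p _), fun h => absurd h (irrefl_of q _)⟩
  · exact ⟨fun _ => h2, fun _ => h1⟩
  · exact ⟨fun h => absurd h1 (asymm h), fun h => absurd h2 (asymm h)⟩
  · exact ⟨fun h => absurd h (irrefl_of p _), fun h => absurd h (irrefl_of q _)⟩

lemma key {A : Type*} [Fintype A] (a b : A) (hab : a ≠ b) (hA : ∀ o : A, o = a ∨ o = b)
    (p : A → A → Prop) (hp : IsStrictTotalOrder A p) (hpab : p a b)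
    (x y : A → ℝ) (hx : IsLottery x) (hy : IsLottery y) (hle : y a ≤ x a)
    (h : ℝ) (u v : A) (hu : IsRep x p h u) (hv : IsRep y p h v) : p u v ∨ u = v := by
  haveI := hp
  have hpba : ¬ p b a := asymm hpab
  have hpaa : ¬ p a a := irrefl_of p a
  have hpbb : ¬ p b b := irrefl_of p b
  have hs : ∀ (z : A → ℝ) (o : A), sWorse z p o
      = (if p o a then z a else 0) + (if p o b then z b else 0) := by
    intro z o
    unfold sWorse
    rw [Finset.sum_filter]
    exact two_sum a b hab hA _
  have hw : ∀ (z : A → ℝ) (o : A), wWorse z p o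
      = (if p o a ∨ a = o then z a else 0) + (if p o b ∨ b = o then z b else 0) := by
    intro z o
    unfold wWorse
    rw [Finset.sum_filter]
    exact two_sum a b hab hA _
  rcases hA u with hu' | hu'
  · rcases hA v with hv' | hv'
    · right; rw [hu', hv']
    · left; rw [hu', hv']; exact hpab
  · rcases hA v with hv' | hv'
    · -- u = b, v = a : derive contradiction
      rw [hu'] at hu
      rw [hv'] at hv
      exfalso
      have hxsum : x a + x b = 1 := by rw [← two_sum a b hab hA x]; exact hx.2
      have hysum : y a + y b = 1 := by rw [← two_sum a b hab hA y]; exact hy.2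
      rcases hu with ⟨h1, hxb, hmax⟩ | ⟨h1, hs1, hw1⟩
      · rcases hv with ⟨_, hya, _⟩ | ⟨h2, _, _⟩
        · have hxa : x a = 0 := hmax a hpab
          have : y a ≤ 0 := by linarith
          linarith [hy.1 a]
        · linarith
      · rcases hv with ⟨h2, _, _⟩ | ⟨h2, hs2, hw2⟩
        · linarith
        · -- sWorse x p b = 0, wWorse x p b = x b, sWorse y p a = y b
          rw [hs] at hs2
          rw [hw] at hw1
          simp [hpab, hpba, hpaa, hpbb, hab, hab.symm] at hs2 hw1
          -- hw1 : h < x b, hs2 : y b ≤ h, but y b ≥ x b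
          have : x b ≤ y b := by linarith
          linarith
    · right; rw [hu', hv']

/-- For two alternatives, every monotone randomized voting rule is strategyproof
for every vector of quantile parameters. -/
theorem stmt2 {N A : Type*} [Fintype N] [Fintype A] (a b : A) (hab : a ≠ b)
    (hA : ∀ o : A, o = a ∨ o = b)
    (R : (N → A → A → Prop) → A → ℝ)
    (hlot : ∀ pr : N → A → A → Prop, (∀ j, IsStrictTotalOrder A (pr j)) → IsLottery (R pr))
    (hmono : ∀ (pr : N → A → A → Prop) (i : N) (p' : A → A → Prop),
      (∀ j, IsStrictTotalOrder A (pr j)) → IsStrictTotalOrder A p' →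
      pr i a b → p' b a → R (Function.update pr i p') a ≤ R pr a)
    (h : N → ℝ) (hh : ∀ i, 0 ≤ h i ∧ h i ≤ 1) :
    ∀ (pr : N → A → A → Prop) (i : N) (p' : A → A → Prop),
      (∀ j, IsStrictTotalOrder A (pr j)) → IsStrictTotalOrder A p' →
      ∀ u v, IsRep (R pr) (pr i) (h i) u →
        IsRep (R (Function.update pr i p')) (pr i) (h i) v → (pr i u v ∨ u = v) := by
  intro pr i p' hpr hp' u v hu hv
  haveI := hpr i
  haveI := hp'
  have hA' : ∀ o : A, o = b ∨ o = a := fun o => (hA o).symm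
  have hprl' : ∀ j, IsStrictTotalOrder A (Function.update pr i p' j) := by
    intro j
    by_cases hj : j = i
    · subst hj; simpa using hp'
    · simpa [Function.update_of_ne hj] using hpr j
  have hxl := hlot pr hpr
  have hyl := hlot _ hprl'
  rcases trichotomous_of (pr i) a b with h1 | h1 | h1
  · -- pr i prefers a
    rcases trichotomous_of p' a b with h2 | h2 | h2
    · -- same order: update is a no-op
      have hpq : p' = pr i := eqOrders a b hA p' (pr i) hp' (hpr i) h2 h1
      have hup : Function.update pr i p' = pr := by
        rw [hpq]; exact Function.update_eq_self i pr
      rw [hup] at hv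
      exact key a b hab hA (pr i) (hpr i) h1 (R pr) (R pr) hxl hxl le_rfl (h i) u v hu hv
    · exact absurd h2 hab
    · have hle := hmono pr i p' hpr hp' h1 h2
      exact key a b hab hA (pr i) (hpr i) h1 (R pr) _ hxl hyl hle (h i) u v hu hv
  · exact absurd h1 hab
  · -- pr i prefers b
    have hxsum : R pr a + R pr b = 1 := by rw [← two_sum a b hab hA (R pr)]; exact hxl.2
    have hysum : R (Function.update pr i p') a + R (Function.update pr i p') b = 1 := by
      rw [← two_sum a b hab hA (R (Function.update pr i p'))]; exact hyl.2
    rcases trichotomous_of p' a b with h2 | h2 | h2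
    · -- p' prefers a; use double-update trick
      have hupi : Function.update pr i p' i = p' := by simp
      have hle1 : R (Function.update (Function.update pr i p') i (pr i)) a
          ≤ R (Function.update pr i p') a := by
        apply hmono _ i (pr i) hprl' (hpr i)
        · rw [hupi]; exact h2
        · exact h1
      have hupd : Function.update (Function.update pr i p') i (pr i) = pr := by
        rw [Function.update_idem]; exact Function.update_eq_self i pr
      rw [hupd] at hle1
      have hle : R (Function.update pr i p') b ≤ R pr b := by linarith
      exact key b a hab.symm hA' (pr i) (hpr i) h1 (R pr) _ hxl hyl hle (h i) u v hu hv
    · exact absurd h2 hab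
    · -- same order
      have hpq : p' = pr i := eqOrders b a hA' p' (pr i) hp' (hpr i) h2 h1
      have hup : Function.update pr i p' = pr := by
        rw [hpq]; exact Function.update_eq_self i pr
      rw [hup] at hv
      exact key b a hab.symm hA' (pr i) (hpr i) h1 (R pr) (R pr) hxl hxl le_rfl (h i) u v hu hv
end

section
/- For two alternatives {a, b}, if a randomized voting rule R is not monotone, then there exists a vector of quantile parameters h ∈ [0,1]^N for which R is not strategyproof. -/
open scoped Classical
open Finset

/-- For two alternatives, if a randomized voting rule is not monotone, then there is a vector
of quantile parameters for which it is not strategyproof. -/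
theorem stmt3 {N A : Type*} [Fintype N] [Fintype A] (a b : A) (hab : a ≠ b)
    (hA : ∀ o : A, o = a ∨ o = b)
    (R : (N → A → A → Prop) → A → ℝ)
    (hlot : ∀ pr : N → A → A → Prop, (∀ j, IsStrictTotalOrder A (pr j)) → IsLottery (R pr))
    (hnotmono : ∃ (pr : N → A → A → Prop) (i : N) (p' : A → A → Prop),
      (∀ j, IsStrictTotalOrder A (pr j)) ∧ IsStrictTotalOrder A p' ∧
      pr i a b ∧ p' b a ∧ R pr a < R (Function.update pr i p') a) :
    ∃ h : N → ℝ, (∀ i, 0 ≤ h i ∧ h i ≤ 1) ∧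
      ∃ (pr : N → A → A → Prop) (i : N) (p' : A → A → Prop),
        (∀ j, IsStrictTotalOrder A (pr j)) ∧ IsStrictTotalOrder A p' ∧
        ∃ u v, IsRep (R pr) (pr i) (h i) u ∧
          IsRep (R (Function.update pr i p')) (pr i) (h i) v ∧ pr i v u := by
  obtain ⟨pr, i, p', hpr, hp', hiab, hpba, hlt⟩ := hnotmono
  set x := R pr with hx
  set y := R (Function.update pr i p') with hy
  have hxl : IsLottery x := hlot pr hpr
  have hyl : IsLottery y := hlot _ (by
    intro j
    by_cases hj : j = i
    · subst hj; simpa [Function.update_self] using hp'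
    · simpa [Function.update_of_ne hj] using hpr j)
  -- univ = {a, b}
  have huniv : (univ : Finset A) = {a, b} := by
    ext o; simp only [mem_univ, mem_insert, mem_singleton, true_iff]
    exact hA o
  have hsum : ∀ z : A → ℝ, ∑ o, z o = z a + z b := by
    intro z; rw [huniv, Finset.sum_pair hab]
  have hxsum : x a + x b = 1 := by rw [← hsum]; exact hxl.2
  have hysum : y a + y b = 1 := by rw [← hsum]; exact hyl.2
  set p := pr i with hp
  haveI : IsStrictTotalOrder A p := hpr i
  have hpaa : ¬ p a a := irrefl a
  have hpbb : ¬ p b b := irrefl b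
  have hpba' : ¬ p b a := asymm hiab
  -- filter computations
  have hsb : sWorse x p b = 0 := by
    unfold sWorse
    rw [huniv]
    rw [Finset.filter_insert, if_neg hpba', Finset.filter_singleton, if_neg hpbb]
    simp
  have hwb : wWorse x p b = x b := by
    unfold wWorse
    rw [huniv, Finset.filter_insert, if_neg (by simp [hpba', hab]),
      Finset.filter_singleton, if_pos (Or.inr rfl)]
    simp
  have hsa : sWorse y p a = y b := by
    unfold sWorse
    rw [huniv, Finset.filter_insert, if_neg hpaa, Finset.filter_singleton, if_pos hiab]
    simp
  have hwa : wWorse y p a = 1 := by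
    unfold wWorse
    rw [huniv, Finset.filter_insert, if_pos (Or.inr rfl),
      Finset.filter_singleton, if_pos (Or.inl hiab)]
    rw [Finset.sum_insert (by simp [hab]), Finset.sum_singleton]
    exact hysum
  -- y b < x b since x a < y a
  have hyb_lt : y b < x b := by linarith
  have hxb_le : x b ≤ 1 := by have := hxl.1 a; linarith
  have h0 : (0:ℝ) ≤ y b := hyl.1 b
  have h1 : y b < 1 := lt_of_lt_of_le hyb_lt hxb_le
  refine ⟨fun _ => y b, fun _ => ⟨h0, le_of_lt h1⟩, pr, i, p', hpr, hp', b, a, ?_, ?_, hiab⟩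
  · exact Or.inr ⟨h1, by rw [hsb]; exact h0, by rw [hwb]; exact hyb_lt⟩
  · exact Or.inr ⟨h1, by rw [hsa], by rw [hwa]; exact h1⟩
end

section
/- For three alternatives and agents all having the same quantile parameter h with 1/2 ≤ h < 2/3, the randomized voting rule returning each of the two alternatives with the highest plurality scores with probability 1/2 each is efficient and strategyproof. -/
open scoped Classical
open Finset

/-- Plurality score of alternative `o`: the number of agents ranking it first. -/
noncomputable def score {N A : Type*} [Fintype N] [Fintype A]
    (pr : N → A → A → Prop) (o : A) : ℕ :=
  (univ.filter fun i => ∀ o', o' ≠ o → pr i o o').card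

section Helpers

set_option linter.unusedSectionVars false

variable {A : Type*} [Fintype A]

lemma exists_best (p : A → A → Prop)
    (htri : ∀ a b, p a b ∨ a = b ∨ p b a)
    (htr : ∀ {a b c}, p a b → p b c → p a c)
    (S : Finset A) (hS : S.Nonempty) : ∃ m ∈ S, ∀ x ∈ S, x ≠ m → p m x := by
  classical
  induction S using Finset.cons_induction with
  | empty => exact absurd hS (by simp)
  | cons a T ha ih =>
    rcases T.eq_empty_or_nonempty with rfl | hT
    · exact ⟨a, by simp, by simp⟩
    · obtain ⟨m, hm, hbest⟩ := ih hT
      rcases htri a m with h1 | h1 | h1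
      · refine ⟨a, Finset.mem_cons_self _ _, ?_⟩
        intro x hx hxa
        rcases Finset.mem_cons.mp hx with rfl | hxT
        · exact absurd rfl hxa
        · rcases em (x = m) with rfl | hxm
          · exact h1
          · exact htr h1 (hbest x hxT hxm)
      · subst h1
        refine ⟨a, Finset.mem_cons_self _ _, ?_⟩
        intro x hx hxa
        rcases Finset.mem_cons.mp hx with rfl | hxT
        · exact absurd rfl hxa
        · exact hbest x hxT hxa
      · refine ⟨m, Finset.mem_cons.mpr (Or.inr hm), ?_⟩
        intro x hx hxm
        rcases Finset.mem_cons.mp hx with rfl | hxT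
        · exact h1
        · exact hbest x hxT hxm

lemma topChar (p : A → A → Prop)
    (hirr : ∀ a, ¬ p a a) (htr : ∀ {a b c}, p a b → p b c → p a c)
    (a0 : A) (ha0 : ∀ x, x ≠ a0 → p a0 x) (o : A) :
    (∀ o', o' ≠ o → p o o') ↔ o = a0 := by
  constructor
  · intro htop
    by_contra hne
    exact hirr o (htr (htop a0 (fun e => hne e.symm)) (ha0 o hne))
  · rintro rfl
    exact fun o' ho' => ha0 o' ho'

lemma wWorse_eq (y : A → ℝ) (p : A → A → Prop) (hirr : ∀ a, ¬ p a a) (o : A) :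
    wWorse y p o = sWorse y p o + y o := by
  classical
  unfold wWorse sWorse
  have hset : univ.filter (fun o' => p o o' ∨ o' = o) = insert o (univ.filter (fun o' => p o o')) := by
    ext u
    simp only [Finset.mem_insert, Finset.mem_filter, Finset.mem_univ, true_and]
    tauto
  rw [hset, Finset.sum_insert (by simp [hirr o])]
  ring

lemma sum_half (s1 s2 : A) (hne : s1 ≠ s2) (S : Finset A) :
    ∑ o' ∈ S, (if o' = s1 ∨ o' = s2 then (1/2:ℝ) else 0)
      = (if s1 ∈ S then (1/2:ℝ) else 0) + (if s2 ∈ S then (1/2:ℝ) else 0) := by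
  classical
  have key : ∀ o', (if o' = s1 ∨ o' = s2 then (1/2:ℝ) else 0)
      = (if o' = s1 then (1/2:ℝ) else 0) + (if o' = s2 then (1/2:ℝ) else 0) := by
    intro o'
    by_cases h1 : o' = s1 <;> by_cases h2 : o' = s2 <;> simp_all
  simp only [key, Finset.sum_add_distrib, Finset.sum_ite_eq' S]

lemma isRep_half_aux (p : A → A → Prop) [hsto : IsStrictTotalOrder A p] (b w : A)
    (hbw : p b w)
    (h : ℝ) (hh1 : 1/2 ≤ h) (hh2 : h < 1) (v : A) :
    IsRep (fun o => if o = b ∨ o = w then (1/2:ℝ) else 0) p h v ↔ v = b := by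
  classical
  have hirr : ∀ a, ¬ p a a := fun a => irrefl_of p a
  have htr : ∀ {a b c}, p a b → p b c → p a c := fun hab hbc => trans_of p hab hbc
  have hne : b ≠ w := by rintro rfl; exact hirr b hbw
  set x : A → ℝ := fun o => if o = b ∨ o = w then (1/2:ℝ) else 0 with hx
  have hsW : ∀ o, sWorse x p o
      = (if p o b then (1/2:ℝ) else 0) + (if p o w then (1/2:ℝ) else 0) := by
    intro o
    unfold sWorse
    rw [show (univ.filter (fun o' => p o o')).sum x
        = ∑ o' ∈ univ.filter (fun o' => p o o'), (if o' = b ∨ o' = w then (1/2:ℝ) else 0) from rfl,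
      sum_half b w hne]
    simp
  have hwW : ∀ o, wWorse x p o = sWorse x p o + x o := wWorse_eq x p hirr
  have hnwb : ¬ p w b := fun hc => hirr b (htr hbw hc)
  have hsb : sWorse x p b = 1/2 := by rw [hsW]; simp [hirr b, hbw]
  have hsw : sWorse x p w = 0 := by rw [hsW]; simp [hirr w, hnwb]
  constructor
  · rintro (⟨he, _⟩ | ⟨_, hs, hw⟩)
    · exact absurd he (by linarith)
    · rw [hwW] at hw
      by_contra hvb
      have hxv : x v = 1/2 ∨ x v = 0 := by
        simp only [hx]; by_cases hc : v = b ∨ v = w <;> simp [hc]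
      rcases hxv with hxv | hxv
      · have hvw : v = w := by
          simp only [hx] at hxv
          by_cases hc : v = b ∨ v = w
          · rcases hc with rfl | rfl
            · exact absurd rfl hvb
            · rfl
          · simp [hc] at hxv
        subst hvw
        rw [hsw] at hw hs
        have hxw : x v = 1/2 := hxv
        rw [hxw] at hw
        linarith
      · rw [hxv] at hw; linarith
  · intro hv
    rw [hv]
    refine Or.inr ⟨hh2, by rw [hsb]; linarith, ?_⟩
    rw [hwW, hsb]
    have hxb : x b = 1/2 := by simp [hx]
    rw [hxb]; linarith

lemma isRep_half (p : A → A → Prop) [hsto : IsStrictTotalOrder A p] (s1 s2 : A) (hne : s1 ≠ s2)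
    (h : ℝ) (hh1 : 1/2 ≤ h) (hh2 : h < 1) (v : A) :
    IsRep (fun o => if o = s1 ∨ o = s2 then (1/2:ℝ) else 0) p h v ↔
      v = (if p s1 s2 then s1 else s2) := by
  by_cases hp : p s1 s2
  · rw [if_pos hp]
    exact isRep_half_aux p s1 s2 hp h hh1 hh2 v
  · have hp' : p s2 s1 := by
      rcases trichotomous_of p s1 s2 with hc | hc | hc
      · exact absurd hc hp
      · exact absurd hc hne
      · exact hc
    rw [if_neg hp]
    have : (fun o => if o = s1 ∨ o = s2 then (1/2:ℝ) else 0)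
        = (fun o => if o = s2 ∨ o = s1 then (1/2:ℝ) else 0) := by
      funext o; exact if_congr or_comm rfl rfl
    rw [this]
    exact isRep_half_aux p s2 s1 hp' h hh1 hh2 v

lemma exists_rep (y : A → ℝ) (hy : IsLottery y) (p : A → A → Prop) [hsto : IsStrictTotalOrder A p]
    [Nonempty A] (h : ℝ) (h0 : 0 ≤ h) (h2 : h < 1) : ∃ o, IsRep y p h o := by
  classical
  have hirr : ∀ a, ¬ p a a := fun a => irrefl_of p a
  have htr : ∀ {a b c}, p a b → p b c → p a c := fun hab hbc => trans_of p hab hbc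
  have htri := fun a b => trichotomous_of p a b
  have htri' : ∀ a b, (fun u v => p v u) a b ∨ a = b ∨ (fun u v => p v u) b a := by
    intro a b; rcases htri a b with hc | hc | hc
    · exact Or.inr (Or.inr hc)
    · exact Or.inr (Or.inl hc)
    · exact Or.inl hc
  have htr' : ∀ {a b c}, (fun u v => p v u) a b → (fun u v => p v u) b c → (fun u v => p v u) a c :=
    fun hab hbc => htr hbc hab
  -- bottom element of univ
  obtain ⟨m0, _, hm0⟩ := exists_best (fun u v => p v u) htri' htr' univ univ_nonempty
  have hs0 : sWorse y p m0 = 0 := by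
    unfold sWorse
    rw [Finset.filter_false_of_mem, Finset.sum_empty]
    intro o' _ hc
    have ho' : o' ≠ m0 := fun e => hirr m0 (e ▸ hc)
    exact hirr m0 (htr hc (hm0 o' (Finset.mem_univ o') ho'))
  set S : Finset A := univ.filter (fun o => sWorse y p o ≤ h) with hS
  have hSne : S.Nonempty := ⟨m0, by simp [hS, hs0, h0]⟩
  obtain ⟨m, hmS, hbest⟩ := exists_best p htri htr S hSne
  have hmsw : sWorse y p m ≤ h := (Finset.mem_filter.mp hmS).2
  refine ⟨m, Or.inr ⟨h2, hmsw, ?_⟩⟩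
  by_contra hno
  push_neg at hno
  set T : Finset A := univ.filter (fun v => p v m) with hT
  rcases T.eq_empty_or_nonempty with hTe | hTne
  · have : wWorse y p m = 1 := by
      unfold wWorse
      rw [Finset.filter_true_of_mem, ← hy.2]
      intro u _
      by_cases hum : u = m
      · exact Or.inr hum
      · rcases htri m u with hc | hc | hc
        · exact Or.inl hc
        · exact absurd hc.symm hum
        · exfalso
          have huT : u ∈ T := by
            rw [hT]
            simp only [Finset.mem_filter, Finset.mem_univ, true_and]
            exact hc
          rw [hTe] at huT
          simp at huT
    rw [this] at hno; linarith
  · obtain ⟨o', ho'T, ho'bot⟩ := exists_best (fun u v => p v u) htri' htr' T hTne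
    have ho'm : p o' m := (Finset.mem_filter.mp ho'T).2
    have hfeq : univ.filter (fun u => p o' u) = univ.filter (fun u => p m u ∨ u = m) := by
      ext u
      simp only [Finset.mem_filter, Finset.mem_univ, true_and]
      constructor
      · intro hu
        by_cases hum : u = m
        · exact Or.inr hum
        rcases htri m u with hc | hc | hc
        · exact Or.inl hc
        · exact absurd hc.symm hum
        · have huT : u ∈ T := Finset.mem_filter.mpr ⟨Finset.mem_univ u, hc⟩
          have huo' : u ≠ o' := fun e => hirr o' (e ▸ hu)
          exact ((hirr o') (htr hu (ho'bot u huT huo'))).elim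
      · rintro (hu | rfl)
        · exact htr ho'm hu
        · exact ho'm
    have hso' : sWorse y p o' ≤ h := by
      have heq : sWorse y p o' = wWorse y p m := by
        unfold sWorse wWorse
        rw [hfeq]
      rw [heq]
      exact hno
    have ho'S : o' ∈ S := Finset.mem_filter.mpr ⟨Finset.mem_univ o', hso'⟩
    have ho'ne : o' ≠ m := fun e => hirr m (e ▸ ho'm)
    exact hirr o' (htr ho'm (hbest o' ho'S ho'ne))

end Helpers
section Main

set_option linter.unusedSectionVars false


variable {A : Type*} [Fintype A]

lemma third_elt (hA : Fintype.card A = 3) (s1 s2 : A) (hne : s1 ≠ s2) :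
    ∃ t, t ≠ s1 ∧ t ≠ s2 ∧ ∀ u : A, u = s1 ∨ u = s2 ∨ u = t := by
  classical
  have h12 : ({s1, s2} : Finset A).card = 2 := by
    rw [Finset.card_insert_of_notMem (by simp [hne]), Finset.card_singleton]
  have hcard : ((univ : Finset A) \ {s1, s2}).card = 1 := by
    rw [Finset.card_sdiff_of_subset (Finset.subset_univ _), Finset.card_univ, hA, h12]
  obtain ⟨t, ht⟩ := Finset.card_eq_one.mp hcard
  have htm : t ∈ (univ : Finset A) \ {s1, s2} := by rw [ht]; exact Finset.mem_singleton_self t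
  have ht1 : t ≠ s1 ∧ t ≠ s2 := by
    have := Finset.mem_sdiff.mp htm
    simp only [Finset.mem_insert, Finset.mem_singleton] at this
    exact ⟨fun e => this.2 (Or.inl e), fun e => this.2 (Or.inr e)⟩
  refine ⟨t, ht1.1, ht1.2, ?_⟩
  intro u
  by_cases h1 : u = s1
  · exact Or.inl h1
  by_cases h2 : u = s2
  · exact Or.inr (Or.inl h2)
  have : u ∈ (univ : Finset A) \ {s1, s2} := by
    rw [Finset.mem_sdiff]
    simp [h1, h2]
  rw [ht, Finset.mem_singleton] at this
  exact Or.inr (Or.inr this)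

lemma sWorse_top (y : A → ℝ) (p : A → A → Prop) (hirr : ∀ a, ¬ p a a) (o : A)
    (htop : ∀ o', o' ≠ o → p o o') : sWorse y p o = (∑ u, y u) - y o := by
  classical
  unfold sWorse
  have hset : univ.filter (fun o' => p o o') = univ.erase o := by
    ext u
    simp only [Finset.mem_filter, Finset.mem_univ, true_and, Finset.mem_erase, and_true]
    constructor
    · intro hu
      exact fun e => hirr o (e ▸ hu)
    · intro hu
      exact htop u hu
  rw [hset, Finset.sum_erase_eq_sub (Finset.mem_univ o)]

end Main

/-- For three alternatives and common quantile parameter `h ∈ [1/2, 2/3)`, the rule returning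
each of the two alternatives with the highest plurality scores (chosen by a consistent
tie-breaking selection `sel` depending only on the score vector) with probability `1/2` each
is efficient and strategyproof. -/
theorem stmt7 {N A : Type*} [Fintype N] [Fintype A] (hA : Fintype.card A = 3)
    (h : ℝ) (h1 : 1/2 ≤ h) (h2 : h < 2/3)
    (sel : (A → ℕ) → A × A)
    (hsel : ∀ s : A → ℕ, (sel s).1 ≠ (sel s).2 ∧
      ∀ w, w ≠ (sel s).1 → w ≠ (sel s).2 → s w ≤ s (sel s).1 ∧ s w ≤ s (sel s).2)
    (R : (N → A → A → Prop) → A → ℝ)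
    (hR : ∀ pr, R pr = fun o =>
      if o = (sel (score pr)).1 ∨ o = (sel (score pr)).2 then (1/2 : ℝ) else 0) :
    (∀ pr : N → A → A → Prop, (∀ j, IsStrictTotalOrder A (pr j)) →
      ¬ ∃ y : A → ℝ, IsLottery y ∧ Dominates pr (fun _ => h) y (R pr)) ∧
    (∀ (pr : N → A → A → Prop) (i : N) (p' : A → A → Prop),
      (∀ j, IsStrictTotalOrder A (pr j)) → IsStrictTotalOrder A p' →
      ∀ u v, IsRep (R pr) (pr i) h u →
        IsRep (R (Function.update pr i p')) (pr i) h v → (pr i u v ∨ u = v)) := by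
  classical
  have hApos : 0 < Fintype.card A := by rw [hA]; norm_num
  haveI : Nonempty A := Fintype.card_pos_iff.mp hApos
  have hh2' : h < 1 := by linarith
  have h0 : (0:ℝ) ≤ h := by linarith
  constructor
  · -- Efficiency
    intro pr hpr hex
    obtain ⟨y, hy, hdom⟩ := hex
    obtain ⟨hdomA, i0, u0, v0, hu0, hv0, hstrict⟩ := hdom
    haveI := hpr i0
    obtain ⟨s1, s2, hpair⟩ : ∃ a b, sel (score pr) = (a, b) := ⟨_, _, rfl⟩
    have hselpr := hsel (score pr)
    rw [hpair] at hselpr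
    dsimp only at hselpr
    have hne12 : s1 ≠ s2 := hselpr.1
    rw [hR pr, hpair] at hv0
    dsimp only at hv0
    have hv0b := (isRep_half (pr i0) s1 s2 hne12 h h1 hh2' v0).mp hv0
    obtain ⟨t, hts1, hts2, hthird⟩ := third_elt hA s1 s2 hne12
    have hirr0 : ∀ a, ¬ pr i0 a a := fun a => irrefl_of (pr i0) a
    have htr0 : ∀ {a b c}, pr i0 a b → pr i0 b c → pr i0 a c :=
      fun hab hbc => trans_of (pr i0) hab hbc
    have htop : u0 = t ∧ ∀ o', o' ≠ t → pr i0 t o' := by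
      by_cases hp : pr i0 s1 s2
      · rw [if_pos hp] at hv0b
        rw [hv0b] at hstrict
        have hu1 : u0 ≠ s1 := fun e => hirr0 s1 (e ▸ hstrict)
        have hu2 : u0 ≠ s2 := by
          intro e; rw [e] at hstrict; exact hirr0 s2 (htr0 hstrict hp)
        have hut : u0 = t := by
          rcases hthird u0 with e|e|e
          exacts [absurd e hu1, absurd e hu2, e]
        rw [hut] at hstrict
        refine ⟨hut, ?_⟩
        intro o' ho'
        rcases hthird o' with e|e|e
        · rw [e]; exact hstrict
        · rw [e]; exact htr0 hstrict hp
        · exact absurd e ho'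
      · have hp' : pr i0 s2 s1 := by
          rcases trichotomous_of (pr i0) s1 s2 with hc|hc|hc
          exacts [absurd hc hp, absurd hc hne12, hc]
        rw [if_neg hp] at hv0b
        rw [hv0b] at hstrict
        have hu2 : u0 ≠ s2 := fun e => hirr0 s2 (e ▸ hstrict)
        have hu1 : u0 ≠ s1 := by
          intro e; rw [e] at hstrict; exact hirr0 s1 (htr0 hstrict hp')
        have hut : u0 = t := by
          rcases hthird u0 with e|e|e
          exacts [absurd e hu1, absurd e hu2, e]
        rw [hut] at hstrict
        refine ⟨hut, ?_⟩
        intro o' ho'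
        rcases hthird o' with e|e|e
        · rw [e]; exact htr0 hstrict hp'
        · rw [e]; exact hstrict
        · exact absurd e ho'
      
    obtain ⟨hu0t, httop⟩ := htop
    rw [hu0t] at hu0
    have hyt : 1 - y t ≤ h := by
      rcases hu0 with ⟨he, _⟩ | ⟨_, hs, _⟩
      · linarith
      · rw [sWorse_top y (pr i0) hirr0 t httop, hy.2] at hs
        linarith
    have hscoret : 0 < score pr t := by
      unfold score
      apply Finset.card_pos.mpr
      exact ⟨i0, Finset.mem_filter.mpr ⟨Finset.mem_univ i0, fun o' ho' => httop o' ho'⟩⟩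
    have hsle := hselpr.2 t hts1 hts2
    have hkey : ∀ s : A, (s = s1 ∨ s = s2) →
        ∀ i1 : N, (∀ o', o' ≠ s → pr i1 s o') → 1 - y s ≤ h := by
      intro s hs12 i1 htop1
      haveI := hpr i1
      have hirr1 : ∀ a, ¬ pr i1 a a := fun a => irrefl_of (pr i1) a
      have htr1 : ∀ {a b c}, pr i1 a b → pr i1 b c → pr i1 a c :=
        fun hab hbc => trans_of (pr i1) hab hbc
      have hbet : s = if pr i1 s1 s2 then s1 else s2 := by
        rcases hs12 with e|e
        · rw [if_pos (by rw [← e]; exact htop1 s2 (fun e2 => hne12 (e2.trans e).symm))]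
          exact e
        · have hp21 : pr i1 s2 s1 := by
            rw [← e]; exact htop1 s1 (fun e2 => hne12 (e2.trans e))
          rw [if_neg (fun hc => hirr1 s1 (htr1 hc hp21))]
          exact e
      have hrepx : IsRep (R pr) (pr i1) h s := by
        rw [hR pr, hpair]
        dsimp only
        exact (isRep_half (pr i1) s1 s2 hne12 h h1 hh2' s).mpr hbet
      obtain ⟨u1, hu1⟩ := exists_rep y hy (pr i1) h h0 hh2'
      have hdres := hdomA i1 u1 s hu1 hrepx
      have hus : u1 = s := by
        rcases hdres with hc | hc
        · exfalso
          have hne : u1 ≠ s := fun e => hirr1 s (e ▸ hc)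
          exact hirr1 u1 (htr1 hc (htop1 u1 hne))
        · exact hc
      rw [hus] at hu1
      rcases hu1 with ⟨he, _⟩ | ⟨_, hs', _⟩
      · linarith
      · rw [sWorse_top y (pr i1) hirr1 s htop1, hy.2] at hs'
        linarith
    have hag : ∀ s : A, 0 < score pr s → ∃ i1, ∀ o', o' ≠ s → pr i1 s o' := by
      intro s hs
      unfold score at hs
      obtain ⟨i1, hi1⟩ := Finset.card_pos.mp hs
      exact ⟨i1, (Finset.mem_filter.mp hi1).2⟩
    obtain ⟨i1, hi1⟩ := hag s1 (lt_of_lt_of_le hscoret hsle.1)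
    obtain ⟨i2, hi2⟩ := hag s2 (lt_of_lt_of_le hscoret hsle.2)
    have hy1 : 1 - y s1 ≤ h := hkey s1 (Or.inl rfl) i1 hi1
    have hy2 : 1 - y s2 ≤ h := hkey s2 (Or.inr rfl) i2 hi2
    have hsum : y s1 + y s2 + y t = 1 := by
      have huniv : (univ : Finset A) = {s1, s2, t} := by
        ext u
        simp only [Finset.mem_univ, Finset.mem_insert, Finset.mem_singleton, true_iff]
        exact hthird u
      have hs1t : s1 ≠ t := fun e => hts1 e.symm
      have hs2t : s2 ≠ t := fun e => hts2 e.symm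
      have hsum2 := hy.2
      rw [huniv, Finset.sum_insert (by simp [hne12, hs1t]),
        Finset.sum_insert (by simp [hs2t]), Finset.sum_singleton] at hsum2
      linarith
    linarith
  · -- Strategyproofness
    intro pr i p' hpr hp' u v hu hv
    haveI := hpr i
    haveI := hp'
    have hirr : ∀ a, ¬ pr i a a := fun a => irrefl_of (pr i) a
    have htr : ∀ {a b c}, pr i a b → pr i b c → pr i a c :=
      fun hab hbc => trans_of (pr i) hab hbc
    have hirr' : ∀ a, ¬ p' a a := fun a => irrefl_of p' a
    have htr' : ∀ {a b c}, p' a b → p' b c → p' a c :=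
      fun hab hbc => trans_of p' hab hbc
    obtain ⟨s1, s2, hpair⟩ : ∃ a b, sel (score pr) = (a, b) := ⟨_, _, rfl⟩
    obtain ⟨q1, q2, hqair⟩ : ∃ a b, sel (score (Function.update pr i p')) = (a, b) := ⟨_, _, rfl⟩
    have hselpr := hsel (score pr)
    rw [hpair] at hselpr
    dsimp only at hselpr
    have hselpr' := hsel (score (Function.update pr i p'))
    rw [hqair] at hselpr'
    dsimp only at hselpr'
    have hne12 : s1 ≠ s2 := hselpr.1
    have hneq : q1 ≠ q2 := hselpr'.1
    rw [hR pr, hpair] at hu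
    dsimp only at hu
    rw [hR (Function.update pr i p'), hqair] at hv
    dsimp only at hv
    have hub := (isRep_half (pr i) s1 s2 hne12 h h1 hh2' u).mp hu
    have hvb := (isRep_half (pr i) q1 q2 hneq h h1 hh2' v).mp hv
    obtain ⟨a0, -, ha0m⟩ := exists_best (pr i) (fun a b => trichotomous_of _ a b) htr univ
      Finset.univ_nonempty
    have ha0' : ∀ x, x ≠ a0 → pr i a0 x := fun x hx => ha0m x (Finset.mem_univ x) hx
    by_cases hvu : v = u
    · exact Or.inr hvu.symm
    by_cases hua : u = a0
    · refine Or.inl ?_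
      rw [hua]
      exact ha0' v (fun e => hvu (e.trans hua.symm))
    -- u ≠ a0: a0 is not among s1 s2
    have ha0s1 : a0 ≠ s1 := by
      intro e
      have hp12 : pr i s1 s2 := by
        have := ha0' s2 (fun h' => hne12 (h'.trans e).symm)
        rwa [e] at this
      rw [if_pos hp12] at hub
      exact hua (hub.trans e.symm)
    have ha0s2 : a0 ≠ s2 := by
      intro e
      have hp21 : pr i s2 s1 := by
        have := ha0' s1 (fun h' => hne12 (h'.trans e))
        rwa [e] at this
      rw [if_neg (fun hc => hirr s1 (htr hc hp21))] at hub
      exact hua (hub.trans e.symm)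
    obtain ⟨a0', -, ha0m'⟩ := exists_best p' (fun a b => trichotomous_of _ a b) htr' univ
      Finset.univ_nonempty
    have ha0'' : ∀ x, x ≠ a0' → p' a0' x := fun x hx => ha0m' x (Finset.mem_univ x) hx
    by_cases haa : a0' = a0
    · -- same top reported: scores unchanged
      have hsceq : score (Function.update pr i p') = score pr := by
        funext o
        unfold score
        congr 1
        ext j
        simp only [Finset.mem_filter, Finset.mem_univ, true_and]
        by_cases hji : j = i
        · rw [hji]
          simp only [Function.update_self]
          rw [topChar p' hirr' htr' a0' ha0'' o, topChar (pr i) hirr htr a0 ha0' o, haa]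
        · simp only [Function.update_of_ne hji]
      rw [hsceq, hpair] at hqair
      have hq1 : q1 = s1 := congrArg Prod.fst hqair.symm
      have hq2 : q2 = s2 := congrArg Prod.snd hqair.symm
      rw [hq1, hq2] at hvb
      exact Or.inr (hub.trans hvb.symm)
    · -- a0' ≠ a0
      obtain ⟨t, hts1, hts2, hthird⟩ := third_elt hA s1 s2 hne12
      have ha0t : a0 = t := by
        rcases hthird a0 with e|e|e
        exacts [absurd e ha0s1, absurd e ha0s2, e]
      have hthird' : ∀ u : A, u = s1 ∨ u = s2 ∨ u = a0 := by
        intro x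
        rcases hthird x with e|e|e
        exacts [Or.inl e, Or.inr (Or.inl e), Or.inr (Or.inr (e.trans ha0t.symm))]
      have hw_mono : ∀ w : A, w ≠ a0 → score pr w ≤ score (Function.update pr i p') w := by
        intro w hw
        unfold score
        apply Finset.card_le_card
        intro j hj
        simp only [Finset.mem_filter, Finset.mem_univ, true_and] at hj ⊢
        have hji : j ≠ i := by
          intro e
          rw [e] at hj
          exact hw ((topChar (pr i) hirr htr a0 ha0' w).mp hj)
        intro o' ho'
        rw [Function.update_of_ne hji]
        exact hj o' ho'
      have ha0_down : score (Function.update pr i p') a0 < score pr a0 := by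
        have hia0 : i ∈ univ.filter (fun j => ∀ o', o' ≠ a0 → pr j a0 o') :=
          Finset.mem_filter.mpr ⟨Finset.mem_univ i, fun o' ho' => ha0' o' ho'⟩
        have hsub : (univ.filter (fun j => ∀ o', o' ≠ a0 → Function.update pr i p' j a0 o'))
            ⊆ (univ.filter (fun j => ∀ o', o' ≠ a0 → pr j a0 o')).erase i := by
          intro j hj
          simp only [Finset.mem_filter, Finset.mem_univ, true_and] at hj
          have hji : j ≠ i := by
            intro e
            rw [e] at hj
            simp only [Function.update_self] at hj
            exact haa ((topChar p' hirr' htr' a0' ha0'' a0).mp hj).symm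
          refine Finset.mem_erase.mpr ⟨hji, Finset.mem_filter.mpr ⟨Finset.mem_univ j, ?_⟩⟩
          intro o' ho'
          have := hj o' ho'
          rwa [Function.update_of_ne hji] at this
        calc score (Function.update pr i p') a0
            ≤ ((univ.filter (fun j => ∀ o', o' ≠ a0 → pr j a0 o')).erase i).card :=
              Finset.card_le_card hsub
          _ < (univ.filter (fun j => ∀ o', o' ≠ a0 → pr j a0 o')).card :=
              Finset.card_erase_lt_of_mem hia0
          _ = score pr a0 := rfl
      have hexw : ∀ qa qo : A, a0 = qa →
          (∀ w, w ≠ qa → w ≠ qo → score (Function.update pr i p') w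
            ≤ score (Function.update pr i p') qa) → False := by
        intro qa qo ha hsle
        have hw12 : (if qo = s1 then s2 else s1) = s1 ∨ (if qo = s1 then s2 else s1) = s2 := by
          by_cases hc : qo = s1
          · exact Or.inr (by rw [if_pos hc])
          · exact Or.inl (by rw [if_neg hc])
        set w := if qo = s1 then s2 else s1 with hwdef
        have hwa0 : w ≠ a0 := by
          rcases hw12 with e|e
          · rw [e]; exact fun e2 => ha0s1 e2.symm
          · rw [e]; exact fun e2 => ha0s2 e2.symm
        have hwqo : w ≠ qo := by
          by_cases hc : qo = s1
          · rw [hwdef, if_pos hc, hc]; exact hne12.symm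
          · rw [hwdef, if_neg hc]; exact fun e2 => hc e2.symm
        have hwqa : w ≠ qa := fun e => hwa0 (e.trans ha.symm)
        have c1 : score (Function.update pr i p') w ≤ score (Function.update pr i p') a0 := by
          rw [ha]; exact hsle w hwqa hwqo
        have c2 : score pr w ≤ score (Function.update pr i p') w := hw_mono w hwa0
        have c3 : score pr a0 ≤ score pr w := by
          have hsc := hselpr.2 a0 ha0s1 ha0s2
          rcases hw12 with e|e
          · rw [e]; exact hsc.1
          · rw [e]; exact hsc.2
        omega
      have hq1a : q1 ≠ a0 := fun e =>
        hexw q1 q2 e.symm (fun w hw1 hw2 => (hselpr'.2 w hw1 hw2).1)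
      have hq2a : q2 ≠ a0 := fun e =>
        hexw q2 q1 e.symm (fun w hw1 hw2 => (hselpr'.2 w hw2 hw1).2)
      have hq1s : q1 = s1 ∨ q1 = s2 := by
        rcases hthird' q1 with e|e|e
        exacts [Or.inl e, Or.inr e, absurd e hq1a]
      have hq2s : q2 = s1 ∨ q2 = s2 := by
        rcases hthird' q2 with e|e|e
        exacts [Or.inl e, Or.inr e, absurd e hq2a]
      refine Or.inr ?_
      rcases hq1s with e1|e1 <;> rcases hq2s with e2|e2
      · exact absurd (e1.trans e2.symm) hneq
      · rw [e1, e2] at hvb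
        exact hub.trans hvb.symm
      · rw [e1, e2] at hvb
        by_cases hp : pr i s1 s2
        · rw [if_pos hp] at hub
          rw [if_neg (fun hc => hirr s1 (htr hp hc))] at hvb
          exact hub.trans hvb.symm
        · have hp21 : pr i s2 s1 := by
            rcases trichotomous_of (pr i) s1 s2 with hc|hc|hc
            exacts [absurd hc hp, absurd hc hne12, hc]
          rw [if_neg hp] at hub
          rw [if_pos hp21] at hvb
          exact hub.trans hvb.symm
      · exact absurd (e1.trans e2.symm) hneq
end

section
/- For three alternatives and agents all having the same quantile parameter h with 2/3 ≤ h ≤ 1, under the uniform lottery (each alternative with probability 1/3) every agent's h-quantile representative is her top-ranked alternative; hence the constant uniform-lottery rule is efficient and strategyproof. -/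
open scoped Classical
open Finset

/-!
With `n` alternatives, the uniform lottery and `1 - 1/n ≤ h < 1`, the weakly-worse mass of `o`
exceeds `h` only when every alternative is weakly worse than `o`; for `h = 1`, every alternative
has positive mass, so nothing may be ranked above the representative. Either way the
representative is the top-ranked alternative. No lottery can give an agent anything better than
her top, so nothing dominates the uniform lottery, and representatives under it are unique.
-/

def IsTopRanked {O : Type*} (p : O → O → Prop) (t : O) : Prop :=
  ∀ o, o ≠ t → p t o

section Ranking

variable {O : Type*} {p : O → O → Prop} {s t : O}

theorem IsTopRanked.eq [Std.Asymm p] (hs : IsTopRanked p s) (ht : IsTopRanked p t) : s = t := by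
  by_contra hne
  exact asymm (hs t (Ne.symm hne)) (ht s hne)

theorem IsTopRanked.not_rel [Std.Asymm p] (ht : IsTopRanked p t) (u : O) : ¬ p u t := by
  intro hut
  by_cases hu : u = t
  · subst hu
    exact irrefl u hut
  · exact asymm hut (ht u hu)

theorem isTopRanked_of_forall_not_rel [Std.Trichotomous p] (h : ∀ u, ¬ p u t) :
    IsTopRanked p t := by
  intro o ho
  rcases trichotomous_of p t o with hto | hto | hot
  · exact hto
  · exact absurd hto.symm ho
  · exact absurd hot (h o)

variable [Fintype O]

theorem filter_rel_or_eq_eq_univ_iff_isTopRanked :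
    univ.filter (fun o => p t o ∨ o = t) = univ ↔ IsTopRanked p t := by
  simp only [Finset.filter_eq_self, Finset.mem_univ, true_implies, IsTopRanked]
  exact forall_congr' fun o => or_iff_not_imp_right

theorem IsTopRanked.filter_rel_eq_erase [Std.Irrefl p] (ht : IsTopRanked p t) :
    univ.filter (fun o => p t o) = univ.erase t := by
  ext o
  simp only [Finset.mem_filter, Finset.mem_univ, true_and, Finset.mem_erase, and_true]
  exact ⟨fun hto hot => irrefl t (hot ▸ hto), ht o⟩

theorem sWorse_const (c : ℝ) (p : O → O → Prop) (o : O) :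
    sWorse (fun _ => c) p o = #(univ.filter (fun o' => p o o')) * c := by
  simp [sWorse]

theorem wWorse_const (c : ℝ) (p : O → O → Prop) (o : O) :
    wWorse (fun _ => c) p o = #(univ.filter (fun o' => p o o' ∨ o' = o)) * c := by
  simp [wWorse]

end Ranking

section Uniform

variable {O : Type*} [Fintype O] {p : O → O → Prop} {c h : ℝ} {t : O}

theorem pos_of_mul_card_eq_one (hc : c * Fintype.card O = 1) : 0 < c := by
  by_contra! hneg
  have := mul_nonpos_of_nonpos_of_nonneg hneg (Nat.cast_nonneg (α := ℝ) (Fintype.card O))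
  linarith

theorem IsTopRanked.isRep_const [Std.Asymm p] (ht : IsTopRanked p t)
    (hc : c * Fintype.card O = 1) (hlo : 1 - c ≤ h) (hhi : h ≤ 1) :
    IsRep (fun _ => c) p h t := by
  rcases hhi.eq_or_lt with rfl | hlt
  · exact Or.inl ⟨rfl, pos_of_mul_card_eq_one hc, fun u hu => absurd hu (ht.not_rel u)⟩
  · have hcard : 0 < Fintype.card O := Fintype.card_pos_iff.mpr ⟨t⟩
    refine Or.inr ⟨hlt, ?_, ?_⟩
    · rw [sWorse_const, ht.filter_rel_eq_erase, Finset.card_erase_of_mem (Finset.mem_univ t),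
        Finset.card_univ, Nat.cast_pred hcard]
      linarith
    · rw [wWorse_const, filter_rel_or_eq_eq_univ_iff_isTopRanked.mpr ht, Finset.card_univ]
      linarith

theorem IsRep.isTopRanked_of_const [Std.Trichotomous p] (hr : IsRep (fun _ => c) p h t)
    (hc : c * Fintype.card O = 1) (hlo : 1 - c ≤ h) : IsTopRanked p t := by
  have hpos := pos_of_mul_card_eq_one hc
  rcases hr with ⟨-, -, habove⟩ | ⟨-, -, hw⟩
  · exact isTopRanked_of_forall_not_rel fun u hu => hpos.ne' (habove u hu)
  · rw [wWorse_const] at hw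
    rw [← filter_rel_or_eq_eq_univ_iff_isTopRanked]
    refine Finset.eq_univ_of_card _ (le_antisymm (Finset.card_le_univ _) ?_)
    have : (Fintype.card O : ℝ) < #(univ.filter (fun o => p t o ∨ o = t)) + 1 := by
      nlinarith
    exact Nat.lt_succ_iff.mp (by exact_mod_cast this)

end Uniform

theorem stmt8_general {N A : Type*} [Fintype A] (hA : Fintype.card A = 3)
    (pref : N → A → A → Prop) (hp : ∀ i, IsStrictTotalOrder A (pref i))
    (h : ℝ) (h1 : 2/3 ≤ h) (h2 : h ≤ 1) :
    (∀ i t, (∀ o, o ≠ t → pref i t o) → IsRep (fun _ => (1/3 : ℝ)) (pref i) h t) ∧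
    (¬ ∃ y : A → ℝ, IsLottery y ∧ Dominates pref (fun _ => h) y (fun _ => (1/3 : ℝ))) ∧
    (∀ i u v, IsRep (fun _ => (1/3 : ℝ)) (pref i) h u →
      IsRep (fun _ => (1/3 : ℝ)) (pref i) h v → (pref i u v ∨ u = v)) := by
  have hc : (1/3 : ℝ) * Fintype.card A = 1 := by rw [hA]; norm_num
  have hlo : 1 - 1/3 ≤ h := by linarith
  refine ⟨fun i t ht => ?_, ?_, fun i u v hu hv => ?_⟩
  · have := hp i
    exact IsTopRanked.isRep_const ht hc hlo h2
  · rintro ⟨y, -, -, i, u, v, -, hv, huv⟩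
    have := hp i
    exact (hv.isTopRanked_of_const hc hlo).not_rel u huv
  · have := hp i
    exact Or.inr ((hu.isTopRanked_of_const hc hlo).eq (hv.isTopRanked_of_const hc hlo))

/-- For three alternatives and common quantile parameter `h ∈ [2/3, 1]`, under the uniform
lottery every agent's `h`-quantile representative is her top-ranked alternative; hence the
constant uniform-lottery rule is efficient (and trivially strategyproof, since any truthful
representative is weakly preferred to any representative after a misreport). -/
theorem stmt8 {N A : Type*} [Fintype N] [Fintype A] (hA : Fintype.card A = 3)
    (pref : N → A → A → Prop) (hp : ∀ i, IsStrictTotalOrder A (pref i))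
    (h : ℝ) (h1 : 2/3 ≤ h) (h2 : h ≤ 1) :
    (∀ i t, (∀ o, o ≠ t → pref i t o) → IsRep (fun _ => (1/3 : ℝ)) (pref i) h t) ∧
    (¬ ∃ y : A → ℝ, IsLottery y ∧ Dominates pref (fun _ => h) y (fun _ => (1/3 : ℝ))) ∧
    (∀ i u v, IsRep (fun _ => (1/3 : ℝ)) (pref i) h u →
      IsRep (fun _ => (1/3 : ℝ)) (pref i) h v → (pref i u v ∨ u = v)) :=
  stmt8_general hA pref hp h h1 h2
end

section
/- In a one-sided matching instance with n agents and n items, if a doubly stochastic lottery x is envy-free with respect to quantile representatives, then it is proportional: every agent i with h_i = 1 has her top item as representative, and every agent i with h_i ∈ [0,1) has a representative of rank at most ⌈n(1 − h_i)⌉ in her preference order. -/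
open scoped Classical
open Finset

/-- The rank of item `g` in agent `i`'s preference (1 = best). -/
noncomputable def rankOf {N A : Type*} [Fintype A] (pref : N → A → A → Prop) (i : N) (g : A) : ℕ :=
  (univ.filter fun g' => pref i g' g).card + 1

/-- If a function is nonnegative with total sum `1`, there is a `p`-maximal option with
positive mass. -/
lemma exists_top {O : Type*} [Fintype O] (p : O → O → Prop) [IsStrictTotalOrder O p]
    (y : O → ℝ) (hy : ∀ o, 0 ≤ y o) (hs : ∑ o, y o = 1) :
    ∃ v, 0 < y v ∧ ∀ o', p o' v → y o' = 0 := by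
  classical
  letI : LinearOrder O := linearOrderOfSTO p
  have hS : (univ.filter fun o => 0 < y o).Nonempty := by
    by_contra hc
    rw [Finset.not_nonempty_iff_eq_empty, Finset.filter_eq_empty_iff] at hc
    have : ∑ o, y o = 0 := Finset.sum_eq_zero fun o _ => le_antisymm (not_lt.mp (hc (mem_univ o))) (hy o)
    simp [this] at hs
  refine ⟨(univ.filter fun o => 0 < y o).min' hS, ?_, ?_⟩
  · have := (univ.filter fun o => 0 < y o).min'_mem hS
    simpa using this
  · intro o' ho'
    by_contra hne
    have hpos : 0 < y o' := lt_of_le_of_ne (hy o') (Ne.symm hne)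
    have hmem : o' ∈ univ.filter fun o => 0 < y o := by simpa using hpos
    have hle := (univ.filter fun o => 0 < y o).min'_le o' hmem
    exact absurd ho' (not_lt.mpr hle)

/-- Existence of a quantile representative when `0 ≤ h < 1`. -/
lemma exists_rep_s11 {O : Type*} [Fintype O] [Nonempty O] (p : O → O → Prop) [IsStrictTotalOrder O p]
    (y : O → ℝ) (hy : ∀ o, 0 ≤ y o) (hs : ∑ o, y o = 1)
    (hq : ℝ) (h0 : 0 ≤ hq) (h1 : hq < 1) :
    ∃ v, sWorse y p v ≤ hq ∧ hq < wWorse y p v := by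
  classical
  letI : LinearOrder O := linearOrderOfSTO p
  set S := univ.filter (fun o => hq < wWorse y p o) with hSdef
  have hS : S.Nonempty := by
    refine ⟨(univ : Finset O).min' univ_nonempty, ?_⟩
    have : wWorse y p ((univ : Finset O).min' univ_nonempty) = 1 := by
      rw [wWorse, ← hs]
      congr 1
      ext o'
      simp only [mem_filter, mem_univ, true_and, iff_true]
      rcases lt_or_eq_of_le ((univ : Finset O).min'_le o' (mem_univ o')) with hlt | heq
      · exact Or.inl hlt
      · exact Or.inr heq.symm
    simp only [hSdef, mem_filter, mem_univ, true_and, this]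
    exact h1
  refine ⟨S.max' hS, ?_, ?_⟩
  · by_contra hc
    push_neg at hc
    have hBne : (univ.filter fun o' => p (S.max' hS) o').Nonempty := by
      rcases Finset.eq_empty_or_nonempty (univ.filter fun o' => p (S.max' hS) o') with he | hne
      · rw [sWorse, he, Finset.sum_empty] at hc
        exact absurd hc (not_lt.mpr h0)
      · exact hne
    set w := (univ.filter fun o' => p (S.max' hS) o').min' hBne with hwdef
    clear_value w
    have hvw : p (S.max' hS) w := by
      rw [hwdef]
      simpa using (univ.filter fun o' => p (S.max' hS) o').min'_mem hBne
    have hwle : ∀ o', p (S.max' hS) o' → (p w o' ∨ o' = w) := by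
      intro o' hlt
      have h1 := (univ.filter fun o'' => p (S.max' hS) o'').min'_le o' (by simpa using hlt)
      rw [← hwdef] at h1
      rcases lt_or_eq_of_le h1 with h' | h'
      · exact Or.inl h'
      · exact Or.inr h'.symm
    have hiff : ∀ o', (p w o' ∨ o' = w) ↔ p (S.max' hS) o' := by
      intro o'
      constructor
      · rintro (hlt | rfl)
        · exact trans_of p hvw hlt
        · exact hvw
      · exact hwle o'
    have hxx : wWorse y p w = sWorse y p (S.max' hS) := by
      unfold wWorse sWorse
      refine Finset.sum_congr ?_ fun _ _ => rfl
      ext o'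
      simp only [mem_filter, mem_univ, true_and]
      exact hiff o'
    have hwS : w ∈ S := by
      rw [hSdef, mem_filter]
      exact ⟨mem_univ w, by rw [hxx]; exact hc⟩
    have := S.le_max' w hwS
    exact absurd hvw (not_lt.mpr this)
  · have := S.max'_mem hS
    simpa [hSdef] using this

/-- Envy-freeness implies proportionality for doubly stochastic lotteries over one-sided
matchings: each agent with `h_i = 1` gets her top item as representative, and each agent with
`h_i < 1` gets a representative of rank at most `⌈n (1 - h_i)⌉`. -/
theorem stmt11 {N M : Type*} [Fintype N] [Fintype M]
    (hcard : Fintype.card N = Fintype.card M)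
    (pref : N → M → M → Prop) (hp : ∀ i, IsStrictTotalOrder M (pref i))
    (h : N → ℝ) (hh : ∀ i, 0 ≤ h i ∧ h i ≤ 1)
    (x : N → M → ℝ) (hpos : ∀ i g, 0 ≤ x i g)
    (hrow : ∀ i, ∑ g, x i g = 1) (hcol : ∀ g, ∑ i, x i g = 1)
    (hEF : ∀ i j u v, IsRep (x i) (pref i) (h i) u → IsRep (x j) (pref i) (h i) v →
      (pref i u v ∨ u = v)) :
    ∀ i g, IsRep (x i) (pref i) (h i) g →
      ((h i = 1 → rankOf pref i g = 1) ∧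
       (h i < 1 → (rankOf pref i g : ℤ) ≤ ⌈(Fintype.card N : ℝ) * (1 - h i)⌉)) := by
  intro i g hrep
  haveI := hp i
  haveI : Nonempty M := ⟨g⟩
  constructor
  · -- h i = 1 case
    intro h1
    rcases hrep with ⟨_, hxg, hzero⟩ | ⟨hlt, _⟩
    swap
    · exact absurd (h1 ▸ hlt) (lt_irrefl 1)
    have hempty : ∀ g', ¬ pref i g' g := by
      intro g' hg'
      have hxg' : x i g' = 0 := hzero g' hg'
      -- find an agent j with positive mass on g'
      have hj : ∃ j, 0 < x j g' := by
        by_contra hc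
        push_neg at hc
        have : ∑ j, x j g' = 0 :=
          Finset.sum_eq_zero fun j _ => le_antisymm (hc j) (hpos j g')
        rw [hcol g'] at this
        norm_num at this
      obtain ⟨j, hj⟩ := hj
      obtain ⟨v, hv, hvtop⟩ := exists_top (pref i) (x j) (hpos j) (hrow j)
      -- v is weakly preferred to g' in pref i
      have hvg : pref i v g := by
        rcases trichotomous_of (pref i) v g' with hvg' | rfl | hg'v
        · exact trans_of (pref i) hvg' hg'
        · exact hg'
        · exact absurd (hvtop g' hg'v) (ne_of_gt hj)
      have hEFv := hEF i j g v (Or.inl ⟨h1, hxg, hzero⟩) (Or.inl ⟨h1, hv, hvtop⟩)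
      rcases hEFv with hgv | rfl
      · exact absurd hvg (asymm_of (pref i) hgv)
      · exact absurd hvg (irrefl_of (pref i) _)
    simp [rankOf, Finset.filter_eq_empty_iff, hempty]
  · -- h i < 1 case
    intro hlt1
    rcases hrep with ⟨h1, _, _⟩ | ⟨_, hsw, hww⟩
    · exact absurd (h1 ▸ hlt1) (lt_irrefl 1)
    set W := univ.filter (fun g' => pref i g g' ∨ g' = g) with hWdef
    set B := univ.filter (fun g' => pref i g' g) with hBdef
    -- cardinalities
    have hWB : W = univ.filter (fun g' => ¬ pref i g' g) := by
      ext g'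
      simp only [hWdef, mem_filter, mem_univ, true_and]
      constructor
      · rintro (hgg' | rfl)
        · exact fun hc => asymm_of (pref i) hgg' hc
        · exact irrefl_of (pref i) g'
      · intro hn
        rcases trichotomous_of (pref i) g g' with h' | rfl | h'
        · exact Or.inl h'
        · exact Or.inr rfl
        · exact absurd h' hn
    have hcards : B.card + W.card = Fintype.card M := by
      rw [hWB, hBdef]
      simpa using Finset.card_filter_add_card_filter_not
        (s := (univ : Finset M)) (p := fun g' => pref i g' g)
    -- key inequality per agent
    have hkey : ∀ j : N, h i < ∑ g' ∈ W, x j g' := by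
      intro j
      obtain ⟨v, hv1, hv2⟩ := exists_rep_s11 (pref i) (x j) (hpos j) (hrow j) (h i) (hh i).1 hlt1
      have hEFv := hEF i j g v (Or.inr ⟨hlt1, hsw, hww⟩) (Or.inr ⟨hlt1, hv1, hv2⟩)
      have hsub : (univ.filter fun o' => pref i v o' ∨ o' = v) ⊆ W := by
        intro o' ho'
        simp only [mem_filter, mem_univ, true_and] at ho'
        simp only [hWdef, mem_filter, mem_univ, true_and]
        rcases ho' with hvo' | rfl
        · rcases hEFv with hgv | rfl
          · exact Or.inl (trans_of (pref i) hgv hvo')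
          · exact Or.inl hvo'
        · rcases hEFv with hgv | rfl
          · exact Or.inl hgv
          · exact Or.inr rfl
      calc h i < wWorse (x j) (pref i) v := hv2
        _ ≤ ∑ g' ∈ W, x j g' := by
          apply Finset.sum_le_sum_of_subset_of_nonneg hsub
          intro o' _ _
          exact hpos j o'
    -- sum over agents
    haveI : Nonempty N := ⟨i⟩
    have hsum : (Fintype.card N : ℝ) * h i < (W.card : ℝ) := by
      calc (Fintype.card N : ℝ) * h i = ∑ _j : N, h i := by
            simp [Finset.sum_const, mul_comm]
        _ < ∑ j : N, ∑ g' ∈ W, x j g' :=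
            Finset.sum_lt_sum_of_nonempty univ_nonempty (fun j _ => hkey j)
        _ = ∑ g' ∈ W, ∑ j : N, x j g' := Finset.sum_comm
        _ = (W.card : ℝ) := by
            rw [Finset.sum_congr rfl fun g' _ => hcol g']
            simp
    -- conclude
    have hBreal : (B.card : ℝ) < (Fintype.card N : ℝ) * (1 - h i) := by
      have hM : (B.card : ℝ) + (W.card : ℝ) = (Fintype.card N : ℝ) := by
        rw [hcard]
        exact_mod_cast hcards
      nlinarith [hsum]
    have hBint : (B.card : ℤ) < ⌈(Fintype.card N : ℝ) * (1 - h i)⌉ := by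
      rw [Int.lt_ceil]
      exact_mod_cast hBreal
    have : (rankOf pref i g : ℤ) = (B.card : ℤ) + 1 := by
      rw [rankOf, hBdef]
      push_cast
      ring
    rw [this]
    omega
end

section
/- There is a one-sided matching instance with two agents having identical preferences a ≻ b over two items and identical quantile parameter h < 1/2, in which no lottery is simultaneously efficient and envy-free. -/
open scoped Classical
open Finset

/-- A doubly stochastic lottery over matchings. -/
def IsDS {N M : Type*} [Fintype N] [Fintype M] (x : N → M → ℝ) : Prop :=
  (∀ i g, 0 ≤ x i g) ∧ (∀ i, ∑ g, x i g = 1) ∧ (∀ g, ∑ i, x i g = 1)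

/-- Lottery `y` over matchings Pareto dominates `x` with respect to quantile representatives. -/
def MDom {N M : Type*} [Fintype M] (pref : N → M → M → Prop) (h : N → ℝ)
    (y x : N → M → ℝ) : Prop :=
  (∀ i u v, IsRep (y i) (pref i) (h i) u → IsRep (x i) (pref i) (h i) v →
    (pref i u v ∨ u = v)) ∧
  (∃ i u v, IsRep (y i) (pref i) (h i) u ∧ IsRep (x i) (pref i) (h i) v ∧ pref i u v)

lemma rep1 (z : Fin 2 → ℝ) : IsRep z (· < ·) 0 1 ↔ 0 < z 1 := by
  simp [IsRep, sWorse, wWorse, Finset.sum_filter, Fin.sum_univ_two]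

lemma rep0 (z : Fin 2 → ℝ) : IsRep z (· < ·) 0 0 ↔ z 1 ≤ 0 ∧ 0 < z 0 + z 1 := by
  simp [IsRep, sWorse, wWorse, Finset.sum_filter, Fin.sum_univ_two]

/-- There is a one-sided matching instance with two agents having identical preferences over
two items and identical quantile parameter `h < 1/2` in which no lottery is simultaneously
efficient and envy-free. -/
theorem stmt12 :
    ∃ (p : Fin 2 → Fin 2 → Prop) (h : ℝ), IsStrictTotalOrder (Fin 2) p ∧ 0 ≤ h ∧ h < 1/2 ∧
      ¬ ∃ x : Fin 2 → Fin 2 → ℝ, IsDS x ∧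
        (¬ ∃ y : Fin 2 → Fin 2 → ℝ, IsDS y ∧ MDom (fun _ => p) (fun _ => h) y x) ∧
        (∀ i j : Fin 2, ∀ u v, IsRep (x i) p h u → IsRep (x j) p h v →
          (p u v ∨ u = v)) := by
  have two : ∀ w : Fin 2, w = 0 ∨ w = 1 := by decide
  refine ⟨(· < ·), 0, inferInstance, le_refl 0, by norm_num, ?_⟩
  rintro ⟨x, ⟨hnn, hrow, hcol⟩, hEff, hEF⟩
  have hrow' : ∀ i, x i 0 + x i 1 = 1 := fun i => by
    simpa [Fin.sum_univ_two] using hrow i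
  have hcol' : ∀ g, x 0 g + x 1 g = 1 := fun g => by
    simpa [Fin.sum_univ_two] using hcol g
  by_cases h01 : 0 < x 0 1
  · by_cases h11 : 0 < x 1 1
    · apply hEff
      refine ⟨fun i g => if i = g then 1 else 0, ⟨?_, ?_, ?_⟩, ?_, ?_⟩
      · intro i g
        show (0:ℝ) ≤ if i = g then 1 else 0
        split <;> norm_num
      · intro i
        rcases two i with h | h <;> subst h <;> simp [Fin.sum_univ_two]
      · intro g
        rcases two g with h | h <;> subst h <;> simp [Fin.sum_univ_two]
      · intro i u v hu hv
        rcases two u with h | h <;> subst h <;> rcases two v with h | h <;> subst h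
        · exact Or.inr rfl
        · left; show (0:Fin 2) < 1; decide
        · exfalso
          rcases two i with h | h <;> subst h
          · rw [rep1] at hu; simp at hu
          · rw [rep0] at hv; exact absurd h11 (not_lt.mpr hv.1)
        · exact Or.inr rfl
      · refine ⟨0, 0, 1, ?_, (rep1 _).mpr h01, by show (0:Fin 2) < 1; decide⟩
        rw [rep0]; norm_num
    · -- x 1 1 = 0
      have e : x 1 1 = 0 := le_antisymm (not_lt.mp h11) (hnn 1 1)
      have e0 : x 1 0 = 1 := by have := hrow' 1; linarith
      have r0 : IsRep (x 0) (· < ·) 0 1 := (rep1 _).mpr h01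
      have r1 : IsRep (x 1) (· < ·) 0 0 :=
        (rep0 _).mpr ⟨le_of_eq e, by rw [e0, e]; norm_num⟩
      rcases hEF 0 1 1 0 r0 r1 with h | h
      · exact absurd h (by decide)
      · exact absurd h (by decide)
  · -- x 0 1 = 0
    have e : x 0 1 = 0 := le_antisymm (not_lt.mp h01) (hnn 0 1)
    have e0 : x 0 0 = 1 := by have := hrow' 0; linarith
    have e1 : x 1 1 = 1 := by have := hcol' 1; linarith
    have r0 : IsRep (x 0) (· < ·) 0 0 :=
      (rep0 _).mpr ⟨le_of_eq e, by rw [e0, e]; norm_num⟩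
    have r1 : IsRep (x 1) (· < ·) 0 1 := (rep1 _).mpr (by rw [e1]; norm_num)
    rcases hEF 1 0 1 0 r1 r0 with h | h
    · exact absurd h (by decide)
    · exact absurd h (by decide)
end

section
/- There exists a two-sided matching instance with two agents on each side, quantile parameters all equal to 1/2, admitting a stable lottery whose Birkhoff–von Neumann decomposition must contain an integral matching that is not integrally stable. -/
open scoped Classical
open Finset

/-- Men's preferences: both m1 and m2 rank w2 (index 1) above w1 (index 0). -/
def pN15 : Fin 2 → Fin 2 → Fin 2 → Prop := fun _ u v => u = 1 ∧ v = 0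

/-- Women's preferences: w1 (index 0) ranks m1 first, w2 (index 1) ranks m2 first. -/
def pM15 : Fin 2 → Fin 2 → Fin 2 → Prop := fun j u v => u = j ∧ v ≠ j

/-- The lottery: x(m1,w1) = 2/3, x(m1,w2) = 1/3, x(m2,w1) = 1/3, x(m2,w2) = 2/3. -/
noncomputable def x15 : Fin 2 → Fin 2 → ℝ := fun i j => if i = j then 2/3 else 1/3

/-- There is a two-sided instance with quantile parameters all `1/2` and a stable lottery
such that every Birkhoff–von Neumann decomposition of it gives positive weight to an integral
matching that is not integrally stable. -/
theorem stmt15 :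
    (∀ i j u v, IsRep (x15 i) (pN15 i) (1/2) u →
      IsRep (fun k => x15 k j) (pM15 j) (1/2) v →
      ((pN15 i u j ∨ u = j) ∨ (pM15 j v i ∨ v = i))) ∧
    (∀ w : Equiv.Perm (Fin 2) → ℝ, (∀ σ, 0 ≤ w σ) → (∑ σ, w σ = 1) →
      (∀ i j, x15 i j = ∑ σ, w σ * (if σ i = j then 1 else 0)) →
      0 < w (Equiv.swap 0 1) ∧
        ¬ (∀ i j, ¬ (pN15 i j ((Equiv.swap (0 : Fin 2) 1) i) ∧
            pM15 j i ((Equiv.swap (0 : Fin 2) 1).symm j)))) := by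
  constructor
  · intro i j u v hu hv
    fin_cases i <;> fin_cases j <;> fin_cases u <;> fin_cases v <;>
      simp_all [IsRep, sWorse, wWorse, pN15, pM15, x15, Finset.sum_filter,
        Fin.sum_univ_two] <;> norm_num at *
  · intro w _hw _hs hx
    have hcl : ∀ σ : Equiv.Perm (Fin 2), σ = 1 ∨ σ = Equiv.swap 0 1 := by decide
    constructor
    · have h01 := hx 0 1
      have : (∑ σ : Equiv.Perm (Fin 2), w σ * (if σ 0 = 1 then 1 else 0))
          = w (Equiv.swap 0 1) := by
        rw [Finset.sum_congr rfl (g := fun σ => if σ = Equiv.swap 0 1 then w σ else 0)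
          (fun σ _ => by
            rcases hcl σ with h | h <;> subst h
            · have h1 : ((1 : Equiv.Perm (Fin 2)) 0 : Fin 2) = 0 := rfl
              have h2 : (1 : Equiv.Perm (Fin 2)) ≠ Equiv.swap 0 1 := by decide
              simp [h1, h2]
            · simp [Equiv.swap_apply_left])]
        simp
      rw [this] at h01
      simp only [x15] at h01
      norm_num at h01
      rw [← h01]; norm_num
    · intro h
      exact h 1 1 ⟨⟨rfl, by decide⟩, ⟨rfl, by decide⟩⟩
end
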